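/- Let n ≥ 3 and z : Fin n → Fin n → Bool. Then every vertex of the graph G(z) has even degree if and only if for every i ∈ Fin n the number of j with z i j = true is even. -/

import Mathlib

/-- The vertex `ℓ_i`, `0 ≤ i ≤ n+1`. -/
def vL {n : ℕ} (i : Fin (n + 2)) : Fin (n + 2) ⊕ Fin (n + 2) ⊕ Fin n := Sum.inl i

/-- The vertex `r_i`, `0 ≤ i ≤ n+1`. -/
def vR {n : ℕ} (i : Fin (n + 2)) : Fin (n + 2) ⊕ Fin (n + 2) ⊕ Fin n :=
  Sum.inr (Sum.inl i)

/-- The vertex `m_{j+1}`, i.e. `j : Fin n` represents the middle vertices `m_1, …, m_n`. -/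
def vM {n : ℕ} (j : Fin n) : Fin (n + 2) ⊕ Fin (n + 2) ⊕ Fin n :=
  Sum.inr (Sum.inr j)

/-- The graph `G(z)` on the `3n+4` vertices `ℓ_0, …, ℓ_{n+1}, r_0, …, r_{n+1}, m_1, …, m_n`.
Fixed edges: `{ℓ_i, ℓ_{i+1}}` and `{r_i, r_{i+1}}` for `0 ≤ i ≤ n`; `{m_j, m_{j+1}}` for
`1 ≤ j ≤ n-1`; and the five edges `{ℓ_0, m_1}`, `{r_0, m_1}`, `{ℓ_{n+1}, m_n}`,
`{r_{n+1}, m_n}`, `{m_1, m_n}`.  In addition, for every `(i, j)` with `z i j = true`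
(where `i, j : Fin n` represent indices `1, …, n`) the two edges `{ℓ_{i+1}, m_{j+1}}` and
`{r_{i+1}, m_{j+1}}`. -/
def GE (n : ℕ) (z : Fin n → Fin n → Bool) :
    SimpleGraph (Fin (n + 2) ⊕ Fin (n + 2) ⊕ Fin n) :=
  SimpleGraph.fromEdgeSet { e |
    (∃ i : Fin (n + 1), e = s(vL i.castSucc, vL i.succ)) ∨
    (∃ i : Fin (n + 1), e = s(vR i.castSucc, vR i.succ)) ∨
    (∃ j : Fin n, ∃ h : j.val + 1 < n, e = s(vM j, vM ⟨j.val + 1, h⟩)) ∨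
    (∃ h : 0 < n,
      e = s(vL 0, vM ⟨0, h⟩) ∨ e = s(vR 0, vM ⟨0, h⟩) ∨
      e = s(vL (Fin.last (n + 1)), vM ⟨n - 1, by omega⟩) ∨
      e = s(vR (Fin.last (n + 1)), vM ⟨n - 1, by omega⟩) ∨
      e = s(vM ⟨0, h⟩, vM ⟨n - 1, by omega⟩)) ∨
    (∃ i j : Fin n, z i j = true ∧
      (e = s(vL ⟨i.val + 1, by have := i.isLt; omega⟩, vM j) ∨
       e = s(vR ⟨i.val + 1, by have := i.isLt; omega⟩, vM j))) }

/-
The parity of every degree except those of `ℓ_1, …, ℓ_n, r_1, …, r_n` is independent of `z`.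
The ends `ℓ_0, ℓ_{n+1}, r_0, r_{n+1}` have one path neighbour and one neighbour `m_1` or `m_n`.
A middle vertex `m_j` is adjacent to `ℓ_i` exactly when it is adjacent to `r_i`, so its
degree is twice the number of such `i` plus its two neighbours on the cycle `m_1 ⋯ m_n`
(here `n ≥ 3`).
Finally `ℓ_i` and `r_i` (`1 ≤ i ≤ n`) have two path neighbours plus one `m_j` for each `j` with
`z i j = true`, so their degrees are even exactly when that row count is.
-/

open Finset SimpleGraph

lemma Fin.val_sub_eq_one_iff {n : ℕ} {a b : Fin n} :
    (a - b).val = 1 ↔ a.val = b.val + 1 ∨ (a.val = 0 ∧ b.val + 1 = n ∧ 1 < n) := by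
  rcases le_or_gt b a with h | h
  · rw [Fin.sub_val_of_le h]; have := Fin.le_def.1 h; omega
  · rw [Fin.coe_sub_iff_lt.2 h]; have := Fin.lt_def.1 h; omega

lemma Finset.card_filter_sum_type {α β : Type*} [Fintype α] [Fintype β] (p : α ⊕ β → Prop)
    [DecidablePred p] : #{x | p x} = #{a | p (.inl a)} + #{b | p (.inr b)} := by
  rw [← card_toLeft_add_card_toRight]
  congr 2 <;> ext <;> simp

lemma Fin.eq_zero_or_eq_last_or_eq_castSucc_succ {n : ℕ} (a : Fin (n + 2)) :
    a = 0 ∨ a = Fin.last (n + 1) ∨ ∃ i : Fin n, a = i.castSucc.succ := by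
  induction a using Fin.cases with
  | zero => exact .inl rfl
  | succ b =>
    induction b using Fin.lastCases with
    | last => exact .inr (.inl rfl)
    | cast i => exact .inr (.inr ⟨i, rfl⟩)

namespace SimpleGraph

lemma degree_eq_card_filter_adj {V : Type*} [Fintype V] (G : SimpleGraph V) [DecidableRel G.Adj]
    (v : V) [Fintype (G.neighborSet v)] :
    G.degree v = #{w | G.Adj v w} := by
  rw [← card_neighborFinset_eq_degree]
  congr 1
  ext
  simp

open scoped Classical in
lemma pathGraph_degree_zero (n : ℕ) : (pathGraph (n + 2)).degree 0 = 1 := by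
  rw [degree_eq_card_filter_adj, card_eq_one]
  refine ⟨1, ?_⟩
  ext b
  simp only [mem_filter, mem_univ, true_and, pathGraph_adj, mem_singleton, Fin.ext_iff,
    Fin.val_zero, Fin.val_one]
  omega

open scoped Classical in
lemma pathGraph_degree_last (n : ℕ) : (pathGraph (n + 2)).degree (Fin.last (n + 1)) = 1 := by
  rw [degree_eq_card_filter_adj, card_eq_one]
  refine ⟨(Fin.last n).castSucc, ?_⟩
  ext b
  simp only [mem_filter, mem_univ, true_and, pathGraph_adj, mem_singleton, Fin.ext_iff,
    Fin.val_last, Fin.val_castSucc]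
  omega

open scoped Classical in
lemma pathGraph_degree_castSucc_succ {n : ℕ} (i : Fin n) :
    (pathGraph (n + 2)).degree i.castSucc.succ = 2 := by
  rw [degree_eq_card_filter_adj, card_eq_two]
  refine ⟨i.castSucc.castSucc, i.succ.succ, by simp [Fin.ext_iff]; omega, ?_⟩
  ext b
  simp only [mem_filter, mem_univ, true_and, pathGraph_adj, mem_insert, mem_singleton, Fin.ext_iff,
    Fin.val_succ, Fin.val_castSucc]
  omega

end SimpleGraph

namespace GE

variable {n : ℕ} {z : Fin n → Fin n → Bool}

lemma exists_eq_vL_or_vR_or_vM (v : Fin (n + 2) ⊕ Fin (n + 2) ⊕ Fin n) :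
    (∃ a, v = vL a) ∨ (∃ a, v = vR a) ∨ ∃ j, v = vM j := by
  rcases v with a | a | j <;> simp [vL, vR, vM]

lemma adj_vL_vL {a b : Fin (n + 2)} :
    (GE n z).Adj (vL a) (vL b) ↔ (pathGraph (n + 2)).Adj a b := by
  simp [GE, vL, vR, vM, pathGraph_adj]
  simp [Fin.ext_iff, Fin.exists_iff, exists_or]
  omega

lemma adj_vR_vR {a b : Fin (n + 2)} :
    (GE n z).Adj (vR a) (vR b) ↔ (pathGraph (n + 2)).Adj a b := by
  simp [GE, vL, vR, vM, pathGraph_adj]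
  simp [Fin.ext_iff, Fin.exists_iff, exists_or]
  omega

lemma not_adj_vL_vR {a b : Fin (n + 2)} : ¬(GE n z).Adj (vL a) (vR b) := by
  simp [GE, vL, vR, vM]

lemma not_adj_vR_vL {a b : Fin (n + 2)} : ¬(GE n z).Adj (vR a) (vL b) :=
  fun h => not_adj_vL_vR h.symm

lemma adj_vM_vM {j k : Fin n} : (GE n z).Adj (vM j) (vM k) ↔ (cycleGraph n).Adj j k := by
  simp [GE, vL, vR, vM, cycleGraph_adj', Fin.val_sub_eq_one_iff]
  simp [Fin.ext_iff, Fin.exists_iff, and_or_left, exists_or]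
  omega

lemma adj_vR_vM_iff_adj_vL_vM {a : Fin (n + 2)} {j : Fin n} :
    (GE n z).Adj (vR a) (vM j) ↔ (GE n z).Adj (vL a) (vM j) := by
  simp [GE, vL, vR, vM]

lemma adj_vL_zero_vM {j : Fin n} : (GE n z).Adj (vL 0) (vM j) ↔ j.val = 0 := by
  simp [GE, vL, vR, vM]
  simp [Fin.ext_iff]
  omega

lemma adj_vL_last_vM {j : Fin n} :
    (GE n z).Adj (vL (Fin.last (n + 1))) (vM j) ↔ j.val = n - 1 := by
  simp [GE, vL, vR, vM]
  simp [Fin.ext_iff]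
  omega

lemma adj_vL_castSucc_succ_vM {i j : Fin n} :
    (GE n z).Adj (vL i.castSucc.succ) (vM j) ↔ z i j := by
  simp [GE, vL, vR, vM]
  simp [Fin.ext_iff, Fin.exists_iff]

open scoped Classical

lemma degree_eq (v : Fin (n + 2) ⊕ Fin (n + 2) ⊕ Fin n) [Fintype ((GE n z).neighborSet v)] :
    (GE n z).degree v =
      #{a | (GE n z).Adj v (vL a)} + #{a | (GE n z).Adj v (vR a)} +
        #{j | (GE n z).Adj v (vM j)} := by
  rw [degree_eq_card_filter_adj, card_filter_sum_type, card_filter_sum_type, add_assoc]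
  rfl

lemma degree_vL (a : Fin (n + 2)) [Fintype ((GE n z).neighborSet (vL a))] :
    (GE n z).degree (vL a) =
      (pathGraph (n + 2)).degree a + #{j | (GE n z).Adj (vL a) (vM j)} := by
  rw [degree_eq, degree_eq_card_filter_adj (pathGraph _)]
  simp only [adj_vL_vL, not_adj_vL_vR, filter_false, card_empty, add_zero]

lemma degree_vR (a : Fin (n + 2)) [Fintype ((GE n z).neighborSet (vR a))]
    [Fintype ((GE n z).neighborSet (vL a))] : (GE n z).degree (vR a) = (GE n z).degree (vL a) := by
  rw [degree_vL, degree_eq, degree_eq_card_filter_adj (pathGraph _)]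
  simp only [adj_vR_vR, not_adj_vR_vL, filter_false, card_empty, zero_add, adj_vR_vM_iff_adj_vL_vM]

lemma even_degree_vM (hn : 3 ≤ n) (j : Fin n) [Fintype ((GE n z).neighborSet (vM j))] :
    Even ((GE n z).degree (vM j)) := by
  obtain ⟨m, rfl⟩ : ∃ m, n = m + 3 := ⟨n - 3, by omega⟩
  have hcycle : #{k | (GE (m + 3) z).Adj (vM j) (vM k)} = 2 := by
    simp only [adj_vM_vM, ← degree_eq_card_filter_adj, cycleGraph_degree_three_le]
  rw [degree_eq, hcycle]
  simp only [(GE _ z).adj_comm (vM j), adj_vR_vM_iff_adj_vL_vM]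
  exact ⟨_ + 1, by ring⟩

lemma degree_vL_zero (hn : 0 < n) [Fintype ((GE n z).neighborSet (vL 0))] :
    (GE n z).degree (vL 0) = 2 := by
  have hspoke : #{j | (GE n z).Adj (vL 0) (vM j)} = 1 := by
    rw [card_eq_one]
    exact ⟨⟨0, hn⟩, by ext; simp [adj_vL_zero_vM, Fin.ext_iff]⟩
  rw [degree_vL, pathGraph_degree_zero, hspoke]

lemma degree_vL_last (hn : 0 < n) [Fintype ((GE n z).neighborSet (vL (Fin.last (n + 1))))] :
    (GE n z).degree (vL (Fin.last (n + 1))) = 2 := by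
  have hspoke : #{j | (GE n z).Adj (vL (Fin.last (n + 1))) (vM j)} = 1 := by
    rw [card_eq_one]
    exact ⟨⟨n - 1, by omega⟩, by ext; simp [adj_vL_last_vM, Fin.ext_iff]⟩
  rw [degree_vL, pathGraph_degree_last, hspoke]

lemma degree_vL_castSucc_succ (i : Fin n) [Fintype ((GE n z).neighborSet (vL i.castSucc.succ))] :
    (GE n z).degree (vL i.castSucc.succ) = #{j | z i j} + 2 := by
  simp only [degree_vL, pathGraph_degree_castSucc_succ, adj_vL_castSucc_succ_vM, add_comm 2]

lemma even_degree_vL (hn : 0 < n) (hrow : ∀ i, Even #{j | z i j}) (a : Fin (n + 2))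
    [Fintype ((GE n z).neighborSet (vL a))] : Even ((GE n z).degree (vL a)) := by
  obtain rfl | rfl | ⟨i, rfl⟩ := Fin.eq_zero_or_eq_last_or_eq_castSucc_succ a
  · simp [degree_vL_zero hn]
  · simp [degree_vL_last hn]
  · simpa [degree_vL_castSucc_succ, Nat.even_add] using hrow i

end GE

theorem GE_even_degree_iff (n : ℕ) (hn : 3 ≤ n) (z : Fin n → Fin n → Bool) :
    (∀ v : Fin (n + 2) ⊕ Fin (n + 2) ⊕ Fin n,
        haveI : Fintype ((GE n z).neighborSet v) := Fintype.ofFinite _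
        Even ((GE n z).degree v)) ↔
      ∀ i : Fin n, Even (Finset.univ.filter fun j => z i j = true).card := by
  constructor
  · intro h i
    simpa [GE.degree_vL_castSucc_succ, Nat.even_add] using h (vL i.castSucc.succ)
  · intro h v
    -- `convert` identifies the instance `Fintype.ofFinite` of the statement with the classical one
    classical
    obtain ⟨a, rfl⟩ | ⟨a, rfl⟩ | ⟨j, rfl⟩ := GE.exists_eq_vL_or_vR_or_vM v
    · convert GE.even_degree_vL (by omega) h a
    · rw [GE.degree_vR]
      convert GE.even_degree_vL (by omega) h a
    · convert GE.even_degree_vM hn j
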